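/- Let ρ be a positive definite matrix on a bipartite space ℂᵐ ⊗ ℂⁿ with Tr ρ = 1, and let τ* be a positive definite matrix with ‖τ*^Γ‖₁ ≤ 1. If S(ρ‖τ*) ≤ S(ρ‖τ) for every positive definite τ with ‖τ^Γ‖₁ ≤ 1, then ‖τ*^Γ‖₁ = 1. -/

import Mathlib

/-!
Rescaling a feasible τ by t > 0 multiplies ‖τ^Γ‖₁ by t and, because Tr ρ = 1, lowers
S(ρ‖tτ) by log t. If c = ‖τ*^Γ‖₁ were below 1, then τ*/c would still be feasible and have
relative entropy S(ρ‖τ*) + log c < S(ρ‖τ*). Here c > 0, since τ*^Γ has the same positive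
diagonal as τ*.
-/

open Matrix
open scoped ComplexOrder

/-- The square root `Matrix.PosSemidef.sqrt` of the older Mathlib (removed since), with its old definition. -/
noncomputable def Matrix.PosSemidef.sqrt {n 𝕜 : Type*} [Fintype n] [DecidableEq n] [RCLike 𝕜]
    {A : Matrix n n 𝕜} (hA : A.PosSemidef) : Matrix n n 𝕜 :=
  (hA.1.eigenvectorUnitary : Matrix n n 𝕜) * diagonal ((↑) ∘ Real.sqrt ∘ hA.1.eigenvalues) *
    (star hA.1.eigenvectorUnitary : Matrix n n 𝕜)

noncomputable def traceNorm {ι : Type*} [Fintype ι] [DecidableEq ι]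
    (A : Matrix ι ι ℂ) : ℝ :=
  ((Matrix.posSemidef_conjTranspose_mul_self A).sqrt.trace).re

noncomputable def mfun {ι : Type*} [Fintype ι] [DecidableEq ι] (g : ℝ → ℝ)
    (A : Matrix ι ι ℂ) : Matrix ι ι ℂ :=
  if hA : A.IsHermitian then
    (hA.eigenvectorUnitary : Matrix ι ι ℂ) *
      Matrix.diagonal (fun i => (g (hA.eigenvalues i) : ℂ)) *
      (star hA.eigenvectorUnitary : Matrix ι ι ℂ)
  else 0

noncomputable def divDiff {ι : Type*} (g : ℝ → ℝ) (a : ι → ℝ) : Matrix ι ι ℝ :=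
  Matrix.of fun i j =>
    if a i = a j then deriv g (a i) else (g (a i) - g (a j)) / (a i - a j)

noncomputable def Dop {ι : Type*} [Fintype ι] [DecidableEq ι] (g : ℝ → ℝ)
    {A : Matrix ι ι ℂ} (hA : A.IsHermitian) (B : Matrix ι ι ℂ) : Matrix ι ι ℂ :=
  (hA.eigenvectorUnitary : Matrix ι ι ℂ) *
    (((divDiff g hA.eigenvalues).map Complex.ofReal) ⊙
      ((star hA.eigenvectorUnitary : Matrix ι ι ℂ) * B *
        (hA.eigenvectorUnitary : Matrix ι ι ℂ))) *
    (star hA.eigenvectorUnitary : Matrix ι ι ℂ)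

noncomputable def relEnt {ι : Type*} [Fintype ι] [DecidableEq ι]
    (ρ σ : Matrix ι ι ℂ) : ℝ :=
  ((ρ * (mfun Real.log ρ - mfun Real.log σ)).trace).re

def ptrans {m n : Type*} (A : Matrix (m × n) (m × n) ℂ) : Matrix (m × n) (m × n) ℂ :=
  Matrix.of fun p q => A (p.1, q.2) (q.1, p.2)

theorem cfc_log_smul {A : Type*} [Ring A] [StarRing A] [Algebra ℝ A] [TopologicalSpace A]
    [ContinuousFunctionalCalculus ℝ A IsSelfAdjoint] [ContinuousMap.UniqueHom ℝ A] {a : A}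
    (ha : IsSelfAdjoint a) (ha₀ : IsUnit a) {r : ℝ} (hr : r ≠ 0) :
    cfc Real.log (r • a) = algebraMap ℝ A (Real.log r) + cfc Real.log a := by
  have hspec : ∀ x ∈ spectrum ℝ a, x ≠ 0 := fun x hx h0 => spectrum.zero_notMem ℝ ha₀ (h0 ▸ hx)
  rw [← cfc_comp_const_mul r Real.log a, cfc_congr fun x hx => Real.log_mul hr (hspec x hx),
    cfc_const_add _ _ a]

section Matrix

variable {ι : Type*} [Fintype ι] [DecidableEq ι]

theorem mfun_eq_cfc {A : Matrix ι ι ℂ} (hA : A.IsHermitian) (g : ℝ → ℝ) :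
    mfun g A = cfc g A := by
  rw [mfun, dif_pos hA, hA.cfc_eq]
  rfl

theorem relEnt_smul_right (ρ : Matrix ι ι ℂ) {σ : Matrix ι ι ℂ} (hσ : σ.IsHermitian)
    (hσ₀ : IsUnit σ) {c : ℝ} (hc : c ≠ 0) :
    relEnt ρ (c • σ) = relEnt ρ σ - Real.log c * ρ.trace.re := by
  have hcσ : (c • σ).IsHermitian := hσ.smul (IsSelfAdjoint.all c)
  rw [relEnt, relEnt, mfun_eq_cfc hcσ, mfun_eq_cfc hσ, cfc_log_smul hσ hσ₀ hc,
    Algebra.algebraMap_eq_smul_one, sub_add_eq_sub_sub_swap, mul_sub, trace_sub, mul_smul_comm,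
    mul_one, trace_smul]
  simp

theorem Matrix.PosSemidef.sqrt_eq_cfc {M : Matrix ι ι ℂ} (hM : M.PosSemidef) :
    hM.sqrt = cfc Real.sqrt M := by
  rw [Matrix.PosSemidef.sqrt, hM.1.cfc_eq]
  rfl

theorem Matrix.PosSemidef.trace_sqrt {M : Matrix ι ι ℂ} (hM : M.PosSemidef) :
    hM.sqrt.trace = ∑ i, (√(hM.1.eigenvalues i) : ℂ) := by
  rw [Matrix.PosSemidef.sqrt, trace_mul_cycle, Unitary.coe_star_mul_self, one_mul, trace_diagonal]
  rfl

theorem traceNorm_eq_sum_sqrt_eigenvalues (A : Matrix ι ι ℂ) :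
    traceNorm A = ∑ i, √((posSemidef_conjTranspose_mul_self A).1.eigenvalues i) := by
  simp [traceNorm, Matrix.PosSemidef.trace_sqrt]

theorem traceNorm_nonneg (A : Matrix ι ι ℂ) : 0 ≤ traceNorm A := by
  rw [traceNorm_eq_sum_sqrt_eigenvalues]
  positivity

theorem traceNorm_pos {A : Matrix ι ι ℂ} (hA : A ≠ 0) : 0 < traceNorm A := by
  have hM := posSemidef_conjTranspose_mul_self A
  refine (traceNorm_nonneg A).lt_of_ne' fun h0 => hA ?_
  rw [traceNorm_eq_sum_sqrt_eigenvalues, Finset.sum_eq_zero_iff_of_nonneg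
    fun i _ => Real.sqrt_nonneg _] at h0
  have heig : hM.1.eigenvalues = 0 := funext fun i =>
    (Real.sqrt_eq_zero (hM.eigenvalues_nonneg i)).mp (h0 i (Finset.mem_univ i))
  exact conjTranspose_mul_self_eq_zero.mp (hM.1.eigenvalues_eq_zero_iff.mp heig)

theorem traceNorm_smul (A : Matrix ι ι ℂ) (r : ℝ) : traceNorm (r • A) = |r| * traceNorm A := by
  have hM := posSemidef_conjTranspose_mul_self A
  have hsq : (r • A)ᴴ * (r • A) = r ^ 2 • (Aᴴ * A) := by
    rw [conjTranspose_smul, smul_mul_smul_comm, sq, star_trivial]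
  have hsqrt : cfc Real.sqrt (r ^ 2 • (Aᴴ * A)) = |r| • cfc Real.sqrt (Aᴴ * A) := by
    refine (cfc_comp_const_mul (r ^ 2) Real.sqrt (Aᴴ * A) (ha := hM.1)).symm.trans ?_
    rw [← cfc_const_mul |r| Real.sqrt (Aᴴ * A)]
    exact cfc_congr fun x _ => by rw [Real.sqrt_mul (sq_nonneg r), Real.sqrt_sq_eq_abs]
  rw [traceNorm, traceNorm, Matrix.PosSemidef.sqrt_eq_cfc, Matrix.PosSemidef.sqrt_eq_cfc, hsq,
    hsqrt, trace_smul]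
  simp

end Matrix

theorem ptrans_smul {m n R : Type*} [SMul R ℂ] (r : R) (A : Matrix (m × n) (m × n) ℂ) :
    ptrans (r • A) = r • ptrans A :=
  rfl

theorem diag_ptrans {m n : Type*} (A : Matrix (m × n) (m × n) ℂ) : (ptrans A).diag = A.diag :=
  rfl

theorem rains_minimizer_on_boundary_general
    {m n : ℕ} (ρ τs : Matrix (Fin m × Fin n) (Fin m × Fin n) ℂ)
    (hρtr : ρ.trace = 1)
    (hτs : τs.PosDef) (hτsΓ : traceNorm (ptrans τs) ≤ 1)
    (hmin : ∀ τ : Matrix (Fin m × Fin n) (Fin m × Fin n) ℂ,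
      τ.PosDef → traceNorm (ptrans τ) ≤ 1 → relEnt ρ τs ≤ relEnt ρ τ) :
    traceNorm (ptrans τs) = 1 := by
  obtain ⟨p⟩ : Nonempty (Fin m × Fin n) := by
    by_contra h
    simp [trace, not_nonempty_iff.mp h] at hρtr
  set c := traceNorm (ptrans τs)
  have hc : 0 < c := traceNorm_pos fun h0 => (hτs.diag_pos (i := p)).ne' <| by
    simpa [h0] using congrFun (diag_ptrans τs).symm p
  have hfeas : traceNorm (ptrans (c⁻¹ • τs)) ≤ 1 := by
    rw [ptrans_smul, traceNorm_smul, abs_of_pos (inv_pos.mpr hc), inv_mul_cancel₀ hc.ne']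
  have hrescale := hmin _ (hτs.smul (inv_pos.mpr hc)) hfeas
  rw [relEnt_smul_right ρ hτs.isHermitian hτs.isUnit (inv_ne_zero hc.ne'), hρtr, Real.log_inv]
    at hrescale
  have hlog : 0 ≤ Real.log c := by simpa using hrescale
  exact le_antisymm hτsΓ ((Real.log_nonneg_iff hc).mp hlog)

theorem rains_minimizer_on_boundary
    {m n : ℕ} (ρ τs : Matrix (Fin m × Fin n) (Fin m × Fin n) ℂ)
    (hρ : ρ.PosDef) (hρtr : ρ.trace = 1)
    (hτs : τs.PosDef) (hτsΓ : traceNorm (ptrans τs) ≤ 1)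
    (hmin : ∀ τ : Matrix (Fin m × Fin n) (Fin m × Fin n) ℂ,
      τ.PosDef → traceNorm (ptrans τ) ≤ 1 → relEnt ρ τs ≤ relEnt ρ τ) :
    traceNorm (ptrans τs) = 1 :=
  rains_minimizer_on_boundary_general ρ τs hρtr hτs hτsΓ hmin
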